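/- arXiv:0810.5392 — 4 statements merged into one kernel-verified Lean document; each statement's English description precedes it below -/
import Mathlib

section
/- Let τ₁,...,τₙ be linearly independent differential 1-forms (modeled as linearly independent vectors in a real vector space V, with Q a symmetric bilinear form represented by coefficients Q_{ij} with Q_{ij}=Q_{ji}, i.e. Q = Σ Q_{ij} τᵢ·τⱼ). Then Q vanishes on the hyperplane {v : τ₁(v)+⋯+τₙ(v)=0} if and only if Q_{ii} + Q_{jj} = 2 Q_{ij} for all i, j. -/
open Submodule LinearMap in
lemma exists_dual_vec {V : Type*} [AddCommGroup V] [Module ℝ V] [FiniteDimensional ℝ V]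
    {n : ℕ} (τ : Fin n → V →ₗ[ℝ] ℝ) (hτ : LinearIndependent ℝ τ) (i : Fin n) :
    ∃ w : V, τ i w = 1 ∧ ∀ k, k ≠ i → τ k w = 0 := by
  have hnot : ¬ (⨅ (k : {k : Fin n // k ≠ i}), ker (τ k) ≤ ker (τ i)) := by
    intro hle
    have hmem : τ i ∈ span ℝ (Set.range fun k : {k : Fin n // k ≠ i} => τ k) :=
      mem_span_of_iInf_ker_le_ker hle
    have hrange : (Set.range fun k : {k : Fin n // k ≠ i} => τ k) = τ '' {i}ᶜ := by
      ext x
      constructor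
      · rintro ⟨⟨k, hk⟩, rfl⟩; exact ⟨k, hk, rfl⟩
      · rintro ⟨k, hk, rfl⟩; exact ⟨⟨k, hk⟩, rfl⟩
    rw [hrange] at hmem
    exact hτ.notMem_span_image (by simp) hmem
  rw [SetLike.not_le_iff_exists] at hnot
  obtain ⟨w, hw1, hw2⟩ := hnot
  refine ⟨(τ i w)⁻¹ • w, ?_, ?_⟩
  · simp only [map_smul, smul_eq_mul]
    exact inv_mul_cancel₀ hw2
  · intro k hk
    have : τ k w = 0 := by
      have := Submodule.mem_iInf (fun k : {k : Fin n // k ≠ i} => ker (τ k)) |>.mp hw1 ⟨k, hk⟩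
      simpa using this
    simp [this]

/-- A symmetric quadratic form `Q = Σ Q_{ij} τᵢ·τⱼ` built from linearly independent
linear functionals `τ₁,…,τₙ` vanishes on the hyperplane `τ₁+⋯+τₙ = 0` iff
`Q_{ii} + Q_{jj} = 2 Q_{ij}` for all `i, j`. -/
theorem quadratic_form_vanishes_on_hyperplane_iff
    {V : Type*} [AddCommGroup V] [Module ℝ V] [FiniteDimensional ℝ V]
    {n : ℕ} (τ : Fin n → V →ₗ[ℝ] ℝ) (hτ : LinearIndependent ℝ τ)
    (Q : Fin n → Fin n → ℝ) (hQsymm : ∀ i j, Q i j = Q j i) :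
    (∀ v : V, (∑ i, τ i v) = 0 → (∑ i, ∑ j, Q i j * (τ i v * τ j v)) = 0) ↔
      (∀ i j, Q i i + Q j j = 2 * Q i j) := by
  constructor
  · intro h i j
    rcases eq_or_ne i j with rfl | hij
    · ring
    · obtain ⟨wi, hwi1, hwi0⟩ := exists_dual_vec τ hτ i
      obtain ⟨wj, hwj1, hwj0⟩ := exists_dual_vec τ hτ j
      set v := wi - wj with hv
      have hτv : ∀ k, τ k v = (if k = i then (1:ℝ) else 0) - (if k = j then (1:ℝ) else 0) := by
        intro k
        simp only [hv, map_sub]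
        rcases eq_or_ne k i with rfl | hki
        · rw [hwi1, if_pos rfl, hwj0 _ hij, if_neg hij]
        · rcases eq_or_ne k j with rfl | hkj
          · rw [hwi0 _ hki, hwj1, if_neg hki, if_pos rfl]
          · rw [hwi0 _ hki, hwj0 _ hkj, if_neg hki, if_neg hkj]
      have hsum : (∑ k, τ k v) = 0 := by
        simp only [hτv]
        rw [Finset.sum_sub_distrib]
        simp
      have := h v hsum
      simp only [hτv] at this
      have key : (∑ k, ∑ l, Q k l * (((if k = i then (1:ℝ) else 0) - if k = j then (1:ℝ) else 0) *
          ((if l = i then (1:ℝ) else 0) - if l = j then (1:ℝ) else 0))) =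
          Q i i - Q i j - Q j i + Q j j := by
        rw [Finset.sum_eq_add_of_mem i j (Finset.mem_univ i) (Finset.mem_univ j) hij]
        · rw [Finset.sum_eq_add_of_mem i j (Finset.mem_univ i) (Finset.mem_univ j) hij,
            Finset.sum_eq_add_of_mem i j (Finset.mem_univ i) (Finset.mem_univ j) hij]
          · simp [hij, hij.symm]; ring
          · intro l _ hl
            simp [hl.1, hl.2]
          · intro l _ hl
            simp [hl.1, hl.2]
        · intro k _ hk
          apply Finset.sum_eq_zero
          intro l _
          simp [hk.1, hk.2]
      rw [key] at this
      rw [hQsymm j i] at this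
      linarith
  · intro h v hv
    have hQ : ∀ i j, Q i j = (Q i i + Q j j) / 2 := fun i j => by
      have := h i j; linarith
    have h1 : ∀ i : Fin n, (∑ j, (Q i i / 2) * (τ i v * τ j v)) = 0 := by
      intro i
      have : (∑ j, (Q i i / 2) * (τ i v * τ j v)) = (Q i i / 2 * τ i v) * ∑ j, τ j v := by
        rw [Finset.mul_sum]; apply Finset.sum_congr rfl; intros; ring
      rw [this, hv, mul_zero]
    have h2 : ∀ j : Fin n, (∑ i, (Q j j / 2) * (τ i v * τ j v)) = 0 := by
      intro j
      have : (∑ i, (Q j j / 2) * (τ i v * τ j v)) = (Q j j / 2 * τ j v) * ∑ i, τ i v := by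
        rw [Finset.mul_sum]; apply Finset.sum_congr rfl; intros; ring
      rw [this, hv, mul_zero]
    calc (∑ i, ∑ j, Q i j * (τ i v * τ j v))
        = ∑ i, ∑ j, ((Q i i / 2) * (τ i v * τ j v) + (Q j j / 2) * (τ i v * τ j v)) := by
          apply Finset.sum_congr rfl; intro i _
          apply Finset.sum_congr rfl; intro j _
          rw [hQ i j]; ring
      _ = (∑ i, ∑ j, (Q i i / 2) * (τ i v * τ j v))
            + ∑ i, ∑ j, (Q j j / 2) * (τ i v * τ j v) := by
          rw [← Finset.sum_add_distrib]
          apply Finset.sum_congr rfl; intro i _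
          rw [Finset.sum_add_distrib]
      _ = 0 := by
          rw [Finset.sum_comm (f := fun i j => (Q j j / 2) * (τ i v * τ j v))]
          simp [h1, h2]
end

section
/- If w is a smooth solution of the Euler equation ∂_x w − w ∂_y w = 0 on an open set, and f is a smooth function satisfying ∂_x f − w ∂_y f = 0 with ∂_y f nonvanishing, then Flex f = 0, i.e. the level sets of f are straight lines. -/
open Real

/-- partial derivative in the x-direction -/
noncomputable def px (f : ℝ × ℝ → ℝ) (p : ℝ × ℝ) : ℝ := fderiv ℝ f p (1, 0)

/-- partial derivative in the y-direction -/
noncomputable def py (f : ℝ × ℝ → ℝ) (p : ℝ × ℝ) : ℝ := fderiv ℝ f p (0, 1)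

/-- Flex f = f_y² f_xx − 2 f_x f_y f_xy + f_x² f_yy -/
noncomputable def Flex (f : ℝ × ℝ → ℝ) (p : ℝ × ℝ) : ℝ :=
  (py f p) ^ 2 * px (px f) p - 2 * px f p * py f p * py (px f) p
    + (px f p) ^ 2 * py (py f) p

/-- If w solves the Euler equation ∂ₓ w − w ∂_y w = 0 and f satisfies
∂ₓ f − w ∂_y f = 0 with ∂_y f nonvanishing, then Flex f = 0. -/
theorem euler_solution_gives_linear_web
    (U : Set (ℝ × ℝ)) (hU : IsOpen U) (w f : ℝ × ℝ → ℝ)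
    (hw : ContDiffOn ℝ (⊤ : ℕ∞) w U) (hf : ContDiffOn ℝ (⊤ : ℕ∞) f U)
    (heuler : ∀ p ∈ U, px w p - w p * py w p = 0)
    (htransport : ∀ p ∈ U, px f p - w p * py f p = 0)
    (hfy : ∀ p ∈ U, py f p ≠ 0) :
    ∀ p ∈ U, Flex f p = 0 := by
  intro p hp
  have hUe : U ∈ nhds p := hU.mem_nhds hp
  have hfC : ContDiffAt ℝ (⊤ : ℕ∞) f p := hf.contDiffAt hUe
  have hwC : ContDiffAt ℝ (⊤ : ℕ∞) w p := hw.contDiffAt hUe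
  -- second derivative of f
  set F2 := fderiv ℝ (fderiv ℝ f) p with hF2
  have hdfU : ∀ q ∈ U, HasFDerivAt f (fderiv ℝ f q) q := fun q hq =>
    ((hf.contDiffAt (hU.mem_nhds hq)).differentiableAt (by simp)).hasFDerivAt
  have hdf : ∀ᶠ q in nhds p, HasFDerivAt f (fderiv ℝ f q) q :=
    Filter.eventually_of_mem hUe hdfU
  have hder2 : HasFDerivAt (fderiv ℝ f) F2 p :=
    ((hfC.fderiv_right (m := 1) (by exact WithTop.coe_le_coe.mpr le_top)).differentiableAt (by simp)).hasFDerivAt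
  have hsym : ∀ v u : ℝ × ℝ, F2 v u = F2 u v := fun v u =>
    second_derivative_symmetric_of_eventually hdf hder2 v u
  -- derivative of q ↦ fderiv f q v
  have happ : ∀ v : ℝ × ℝ,
      HasFDerivAt (fun q => fderiv ℝ f q v)
        ((ContinuousLinearMap.apply ℝ ℝ v).comp F2) p := fun v =>
    (ContinuousLinearMap.apply ℝ ℝ v).hasFDerivAt.comp p hder2
  -- derivative of w at p
  have hdw : HasFDerivAt w (fderiv ℝ w p) p :=
    (hwC.differentiableAt (by simp)).hasFDerivAt
  -- product q ↦ w q * py f q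
  have hprod : HasFDerivAt (fun q => w q * py f q)
      (w p • ((ContinuousLinearMap.apply ℝ ℝ (0,1)).comp F2)
        + py f p • fderiv ℝ w p) p := by
    have := hdw.mul (happ (0,1))
    simp only [py]; exact this
  -- px f = w * py f on a neighborhood of p
  have heq : (fun q => px f q) =ᶠ[nhds p] (fun q => w q * py f q) := by
    filter_upwards [hUe] with q hq
    have := htransport q hq
    linarith
  have hfderiv_eq : fderiv ℝ (px f) p = fderiv ℝ (fun q => w q * py f q) p :=
    Filter.EventuallyEq.fderiv_eq heq
  have hpxf : fderiv ℝ (px f) p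
      = w p • ((ContinuousLinearMap.apply ℝ ℝ (0,1)).comp F2)
        + py f p • fderiv ℝ w p := by
    rw [hfderiv_eq]; exact hprod.fderiv
  -- the key mixed derivative facts
  have e1 : px (px f) p = w p * F2 (1,0) (0,1) + py f p * px w p := by
    simp [px, hpxf]
  have e2 : py (px f) p = w p * F2 (0,1) (0,1) + py f p * py w p := by
    simp [py, px, hpxf]
  have e3 : py (px f) p = F2 (0,1) (1,0) := by
    have h0 : px f = fun q => fderiv ℝ f q (1,0) := rfl
    rw [py, h0, (happ (1,0)).fderiv]; simp
  have e5 : py (py f) p = F2 (0,1) (0,1) := by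
    have h0 : py f = fun q => fderiv ℝ f q (0,1) := rfl
    rw [py, h0, (happ (0,1)).fderiv]; simp
  have hmix : F2 (1,0) (0,1) = w p * F2 (0,1) (0,1) + py f p * py w p := by
    rw [← hsym (0,1) (1,0), ← e3, e2]
  have htr : px f p = w p * py f p := by
    have := htransport p hp; linarith
  have heu := heuler p hp
  have key : Flex f p
      = (py f p) ^ 3 * (px w p - w p * py w p) := by
    rw [Flex, e1, e2, e5, hmix, htr]; ring
  rw [key, heu, mul_zero]
end

section
/- For the flat connection (all Christoffel symbols zero), the foliation by level sets of a smooth function f with nonvanishing gradient is totally geodesic (i.e. each level curve is a straight line) if and only if Flex f = 0: concretely, if Flex f = 0 and ∇f ≠ 0 on a convex open set U, then each connected component of each level set of f is contained in an affine line. -/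
/-!
Let `v = (-f_y, f_x)(q)` be the tangent of the level curve through `q`. Along the line
`t ↦ q + t v` the function `ψ t = Df(q + t v) v` solves a linear ODE `ψ' = κ ψ`: in the frame
`(∇f⊥, ∇f)` the Hessian of `f` at `(v, v)` has no `(∇f⊥, ∇f⊥)` term because `Flex f = 0`, and
every other term carries a factor `ψ`. As `ψ 0 = 0`, uniqueness gives `ψ ≡ 0`, so `f` is
constant on the tangent line and `∇f` stays normal to it. Since `f` is strictly monotone in the
normal direction near `q`, the level set near `q` is contained in that line; connectedness
spreads this from `p` over its whole component.
-/

open Real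

open Set Filter Topology Module

theorem eqOn_zero_of_hasDerivAt_eq_mul {ψ κ : ℝ → ℝ} {a b t₀ : ℝ}
    (hκ : ContinuousOn κ (Icc a b)) (hψ : ∀ t ∈ Icc a b, HasDerivAt ψ (κ t * ψ t) t)
    (ht₀ : t₀ ∈ Icc a b) (hψ₀ : ψ t₀ = 0) : EqOn ψ 0 (Icc a b) := by
  obtain ⟨C, hC⟩ := isCompact_Icc.exists_bound_of_continuousOn hκ
  have hlip : ∀ t ∈ Icc a b, LipschitzOnWith C.toNNReal (fun x => κ t * x) univ :=
    fun t ht => LipschitzWith.lipschitzOnWith <| LipschitzWith.of_dist_le_mul fun x y => by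
      rw [Real.dist_eq, Real.dist_eq, ← mul_sub, abs_mul]
      gcongr
      exact (hC t ht).trans (Real.le_coe_toNNReal C)
  have hψc : ContinuousOn ψ (Icc a b) := fun t ht => (hψ t ht).continuousAt.continuousWithinAt
  have h0 : ∀ t, HasDerivAt (0 : ℝ → ℝ) (κ t * 0) t := fun t => by simp
  have hleft : Icc a t₀ ⊆ Icc a b := Icc_subset_Icc_right ht₀.2
  have hright : Icc t₀ b ⊆ Icc a b := Icc_subset_Icc_left ht₀.1
  rw [← Icc_union_Icc_eq_Icc ht₀.1 ht₀.2]
  refine EqOn.union ?_ ?_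
  · exact ODE_solution_unique_of_mem_Icc_left (s := fun _ => univ)
      (fun t ht => hlip t (hleft (Ioc_subset_Icc_self ht))) (hψc.mono hleft)
      (fun t ht => (hψ t (hleft (Ioc_subset_Icc_self ht))).hasDerivWithinAt)
      (fun _ _ => mem_univ _) continuousOn_const (fun t _ => (h0 t).hasDerivWithinAt)
      (fun _ _ => mem_univ _) hψ₀
  · exact ODE_solution_unique_of_mem_Icc_right (s := fun _ => univ)
      (fun t ht => hlip t (hright (Ico_subset_Icc_self ht))) (hψc.mono hright)
      (fun t ht => (hψ t (hright (Ico_subset_Icc_self ht))).hasDerivWithinAt)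
      (fun _ _ => mem_univ _) continuousOn_const (fun t _ => (h0 t).hasDerivWithinAt)
      (fun _ _ => mem_univ _) hψ₀

theorem IsPreconnected.subset_of_forall_eventually {X : Type*} [TopologicalSpace X]
    {s t : Set X} (hs : IsPreconnected s) (ht : IsClosed t) (hst : (s ∩ t).Nonempty)
    (hloc : ∀ x ∈ s ∩ t, ∀ᶠ y in 𝓝 x, y ∈ s → y ∈ t) : s ⊆ t := by
  intro x hx
  by_contra hxt
  set V := {y | ∀ᶠ z in 𝓝 y, z ∈ s → z ∈ t}
  have hV : IsOpen V := isOpen_setOfPred_eventually_nhds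
  have hcover : s ⊆ V ∪ tᶜ := fun y hy => by
    by_cases hyt : y ∈ t
    · exact Or.inl (hloc y ⟨hy, hyt⟩)
    · exact Or.inr hyt
  obtain ⟨y, hys, hyV, hyt⟩ := hs V tᶜ hV ht.isOpen_compl hcover
    (hst.mono fun y hy => ⟨hy.1, hloc y hy⟩) ⟨x, hx, hxt⟩
  exact hyt (hyV.self_of_nhds hys)

theorem exists_eq_smul_of_apply_eq_zero {K V : Type*} [Field K] [AddCommGroup V] [Module K V]
    [FiniteDimensional K V] (hV : finrank K V = 2) {ℓ : Dual K V} (hℓ : ℓ ≠ 0) {x y : V}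
    (hy₀ : y ≠ 0) (hx : ℓ x = 0) (hy : ℓ y = 0) : ∃ c : K, x = c • y := by
  have hker : finrank K (LinearMap.ker ℓ) = 1 := by
    have := Dual.finrank_ker_add_one_of_ne_zero hℓ
    omega
  obtain ⟨c, hc⟩ := (finrank_eq_one_iff_of_nonzero' (⟨y, hy⟩ : LinearMap.ker ℓ)
    (by simpa [← Subtype.coe_ne_coe] using hy₀)).1 hker ⟨x, hx⟩
  exact ⟨c, by simpa using (congrArg Subtype.val hc).symm⟩

theorem Convex.add_smul_mem_of_mem_uIcc {E : Type*} [AddCommGroup E] [Module ℝ E] {U : Set E}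
    (hU : Convex ℝ U) {q v : E} {T t : ℝ} (hq : q ∈ U) (hT : q + T • v ∈ U)
    (ht : t ∈ uIcc 0 T) : q + t • v ∈ U := by
  have hline : ∀ s : ℝ, AffineMap.lineMap q (q + v) s = q + s • v := fun s => by
    simp [AffineMap.lineMap_apply_module', add_comm]
  have h := image_segment ℝ (AffineMap.lineMap q (q + v)) 0 T
  rw [segment_eq_uIcc, hline, hline, zero_smul, add_zero] at h
  exact hU.segment_subset hq hT (h ▸ ⟨t, ht, hline t⟩)

section Lines

variable {E F : Type*} [NormedAddCommGroup E] [NormedSpace ℝ E] [NormedAddCommGroup F]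
  [NormedSpace ℝ F] {f : E → F} {q v : E} {t : ℝ}

theorem DifferentiableAt.hasDerivAt_comp_add_smul (hf : DifferentiableAt ℝ f (q + t • v)) :
    HasDerivAt (fun s : ℝ => f (q + s • v)) (fderiv ℝ f (q + t • v) v) t :=
  hf.hasFDerivAt.comp_hasDerivAt t <| by
    simpa using ((hasDerivAt_id t).smul_const v).const_add q

theorem strictMonoOn_comp_add_smul {f : E → ℝ} {I : Set ℝ} (hI : Convex ℝ I)
    (hf : ∀ s ∈ I, DifferentiableAt ℝ f (q + s • v))
    (hpos : ∀ s ∈ I, 0 < fderiv ℝ f (q + s • v) v) :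
    StrictMonoOn (fun s => f (q + s • v)) I :=
  strictMonoOn_of_deriv_pos hI
    (fun s hs => (hf s hs).hasDerivAt_comp_add_smul.continuousAt.continuousWithinAt)
    fun s hs => by
      rw [(hf s (interior_subset hs)).hasDerivAt_comp_add_smul.deriv]
      exact hpos s (interior_subset hs)

end Lines

section PartialDerivatives

variable {f : ℝ × ℝ → ℝ} {p : ℝ × ℝ}

theorem fderiv_apply_eq_px_py (f : ℝ × ℝ → ℝ) (p u : ℝ × ℝ) :
    fderiv ℝ f p u = u.1 * px f p + u.2 * py f p := by
  conv_lhs => rw [show u = u.1 • (1, 0) + u.2 • (0, 1) by ext <;> simp]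
  simp only [map_add, map_smul, px, py, smul_eq_mul]

noncomputable def rotGrad (f : ℝ × ℝ → ℝ) (p : ℝ × ℝ) : ℝ × ℝ := (-py f p, px f p)

theorem fderiv_apply_rotGrad (f : ℝ × ℝ → ℝ) (p : ℝ × ℝ) :
    fderiv ℝ f p (rotGrad f p) = 0 := by
  rw [fderiv_apply_eq_px_py, rotGrad]
  ring

theorem rotGrad_ne_zero (h : (px f p, py f p) ≠ (0, 0)) : rotGrad f p ≠ 0 := by
  intro h0
  apply h
  simp only [rotGrad, Prod.mk_eq_zero, neg_eq_zero] at h0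
  rw [h0.1, h0.2]

theorem coe_fderiv_ne_zero (h : (px f p, py f p) ≠ (0, 0)) :
    (fderiv ℝ f p : ℝ × ℝ →ₗ[ℝ] ℝ) ≠ 0 := by
  intro h0
  apply h
  simp only [px, py, ← ContinuousLinearMap.coe_coe, h0, LinearMap.zero_apply]

theorem ContDiffAt.px {n : WithTop ℕ∞} (hf : ContDiffAt ℝ (n + 1) f p) :
    ContDiffAt ℝ n (px f) p :=
  (hf.fderiv_right le_rfl).clm_apply contDiffAt_const

theorem ContDiffAt.py {n : WithTop ℕ∞} (hf : ContDiffAt ℝ (n + 1) f p) :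
    ContDiffAt ℝ n (py f) p :=
  (hf.fderiv_right le_rfl).clm_apply contDiffAt_const

theorem py_px_eq_px_py (hf : ContDiffAt ℝ 2 f p) : py (px f) p = px (py f) p := by
  have hd : DifferentiableAt ℝ (fderiv ℝ f) p :=
    (hf.fderiv_right (m := 1) le_rfl).differentiableAt one_ne_zero
  change fderiv ℝ (fun x => fderiv ℝ f x (1, 0)) p (0, 1)
    = fderiv ℝ (fun x => fderiv ℝ f x (0, 1)) p (1, 0)
  simp only [fderiv_clm_apply hd (differentiableAt_const _)]
  simpa using hf.isSymmSndFDerivAt (by simp) (0, 1) (1, 0)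

end PartialDerivatives

section FlexRate

variable {f : ℝ × ℝ → ℝ} {p q v : ℝ × ℝ}

theorem px_sq_add_py_sq_pos (h : (px f p, py f p) ≠ (0, 0)) : 0 < px f p ^ 2 + py f p ^ 2 := by
  contrapose! h
  have hx : px f p = 0 := by nlinarith [sq_nonneg (px f p), sq_nonneg (py f p)]
  have hy : py f p = 0 := by nlinarith [sq_nonneg (px f p), sq_nonneg (py f p)]
  rw [hx, hy]

/-- With `v = λ • rotGrad f r + μ • ∇f r`, where `μ = Df r v / |∇f r|²`, the Hessian form is
`D²f r (v, v) = λ² Flex f r + μ (2 λ D²f r (rotGrad f r, ∇f r) + μ D²f r (∇f r, ∇f r))`;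
`flexRate f v r` is the second summand divided by `Df r v`. -/
noncomputable def flexRate (f : ℝ × ℝ → ℝ) (v r : ℝ × ℝ) : ℝ :=
  (2 * (v.2 * px f r - v.1 * py f r) * (-(px f r * py f r) * px (px f) r
      + (px f r ^ 2 - py f r ^ 2) * py (px f) r + px f r * py f r * py (py f) r)
    + (v.1 * px f r + v.2 * py f r) * (px f r ^ 2 * px (px f) r
      + 2 * px f r * py f r * py (px f) r + py f r ^ 2 * py (py f) r))
    / (px f r ^ 2 + py f r ^ 2) ^ 2

theorem hasDerivAt_fderiv_apply_add_smul {t : ℝ} (hf : ContDiffAt ℝ 2 f (q + t • v))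
    (hgrad : (px f (q + t • v), py f (q + t • v)) ≠ (0, 0)) (hflex : Flex f (q + t • v) = 0) :
    HasDerivAt (fun s => fderiv ℝ f (q + s • v) v)
      (flexRate f v (q + t • v) * fderiv ℝ f (q + t • v) v) t := by
  have hx := ((ContDiffAt.px (n := 1) hf).differentiableAt one_ne_zero).hasDerivAt_comp_add_smul
  have hy := ((ContDiffAt.py (n := 1) hf).differentiableAt one_ne_zero).hasDerivAt_comp_add_smul
  rw [show (fun s => fderiv ℝ f (q + s • v) v)
      = fun s => v.1 * px f (q + s • v) + v.2 * py f (q + s • v)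
    from funext fun s => fderiv_apply_eq_px_py f _ v]
  refine ((hx.const_mul v.1).add (hy.const_mul v.2)).congr_deriv ?_
  have hn := (px_sq_add_py_sq_pos hgrad).ne'
  simp only [fderiv_apply_eq_px_py f, fderiv_apply_eq_px_py (px f), fderiv_apply_eq_px_py (py f),
    ← py_px_eq_px_py hf, flexRate]
  unfold Flex at hflex
  field_simp
  linear_combination (v.2 * px f (q + t • v) - v.1 * py f (q + t • v)) ^ 2 * hflex

theorem continuousOn_flexRate {U : Set (ℝ × ℝ)} (hU : IsOpen U) (hf : ContDiffOn ℝ 2 f U)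
    (hgrad : ∀ p ∈ U, (px f p, py f p) ≠ (0, 0)) (v : ℝ × ℝ) :
    ContinuousOn (flexRate f v) U := by
  have hf' : ∀ p ∈ U, ContDiffAt ℝ 2 f p := fun p hp => hf.contDiffAt (hU.mem_nhds hp)
  have ha : ContinuousOn (px f) U := continuousOn_of_forall_continuousAt fun p hp =>
    (ContDiffAt.px (n := 1) (hf' p hp)).continuousAt
  have hb : ContinuousOn (py f) U := continuousOn_of_forall_continuousAt fun p hp =>
    (ContDiffAt.py (n := 1) (hf' p hp)).continuousAt
  have hA : ContinuousOn (px (px f)) U := continuousOn_of_forall_continuousAt fun p hp =>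
    (ContDiffAt.px (n := 0) (ContDiffAt.px (n := 1) (hf' p hp))).continuousAt
  have hB : ContinuousOn (py (px f)) U := continuousOn_of_forall_continuousAt fun p hp =>
    (ContDiffAt.py (n := 0) (ContDiffAt.px (n := 1) (hf' p hp))).continuousAt
  have hC : ContinuousOn (py (py f)) U := continuousOn_of_forall_continuousAt fun p hp =>
    (ContDiffAt.py (n := 0) (ContDiffAt.py (n := 1) (hf' p hp))).continuousAt
  unfold flexRate
  exact ContinuousOn.div (by fun_prop) (by fun_prop) fun p hp =>
    pow_ne_zero 2 (px_sq_add_py_sq_pos (hgrad p hp)).ne'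

end FlexRate

section LevelSets

variable {U : Set (ℝ × ℝ)} {f : ℝ × ℝ → ℝ} {p q : ℝ × ℝ} {T : ℝ}

theorem fderiv_add_smul_rotGrad_apply_rotGrad (hU : IsOpen U) (hconv : Convex ℝ U)
    (hf : ContDiffOn ℝ 2 f U) (hgrad : ∀ p ∈ U, (px f p, py f p) ≠ (0, 0))
    (hflex : ∀ p ∈ U, Flex f p = 0) (hq : q ∈ U) (hT : q + T • rotGrad f q ∈ U) :
    fderiv ℝ f (q + T • rotGrad f q) (rotGrad f q) = 0 := by
  set v := rotGrad f q
  have hseg : ∀ t ∈ uIcc 0 T, q + t • v ∈ U := fun t ht =>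
    hconv.add_smul_mem_of_mem_uIcc hq hT ht
  refine eqOn_zero_of_hasDerivAt_eq_mul (ψ := fun t => fderiv ℝ f (q + t • v) v)
    ((continuousOn_flexRate hU hf hgrad v).comp (by fun_prop) hseg) (fun t ht => ?_)
    left_mem_uIcc (by simpa using fderiv_apply_rotGrad f q) right_mem_uIcc
  have hr := hseg t ht
  exact hasDerivAt_fderiv_apply_add_smul (hf.contDiffAt (hU.mem_nhds hr)) (hgrad _ hr)
    (hflex _ hr)

theorem apply_add_smul_rotGrad (hU : IsOpen U) (hconv : Convex ℝ U)
    (hf : ContDiffOn ℝ 2 f U) (hgrad : ∀ p ∈ U, (px f p, py f p) ≠ (0, 0))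
    (hflex : ∀ p ∈ U, Flex f p = 0) (hq : q ∈ U) (hT : q + T • rotGrad f q ∈ U) :
    f (q + T • rotGrad f q) = f q := by
  have hderiv : ∀ t ∈ uIcc 0 T,
      HasDerivWithinAt (fun s => f (q + s • rotGrad f q)) 0 (uIcc 0 T) t := fun t ht => by
    have hr := hconv.add_smul_mem_of_mem_uIcc hq hT ht
    have h :=
      ((hf.contDiffAt (hU.mem_nhds hr)).differentiableAt two_ne_zero).hasDerivAt_comp_add_smul
    rw [fderiv_add_smul_rotGrad_apply_rotGrad hU hconv hf hgrad hflex hq hr] at h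
    exact h.hasDerivWithinAt
  simpa [sub_eq_zero] using (convex_uIcc 0 T).norm_image_sub_le_of_norm_hasDerivWithin_le
    (C := 0) hderiv (fun _ _ => by simp) left_mem_uIcc right_mem_uIcc

theorem eventually_fderiv_apply_sub_eq_zero (hU : IsOpen U) (hconv : Convex ℝ U)
    (hf : ContDiffOn ℝ 2 f U) (hgrad : ∀ p ∈ U, (px f p, py f p) ≠ (0, 0))
    (hflex : ∀ p ∈ U, Flex f p = 0) (hq : q ∈ U) :
    ∀ᶠ r in 𝓝 q, f r = f q → fderiv ℝ f q (r - q) = 0 := by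
  set w := rotGrad f q
  set n : ℝ × ℝ := (px f q, py f q)
  set N := px f q ^ 2 + py f q ^ 2
  have hN : 0 < N := px_sq_add_py_sq_pos (hgrad q hq)
  set W := U ∩ (fun r => fderiv ℝ f r n) ⁻¹' Ioi 0
  have hW : IsOpen W :=
    ((hf.continuousOn_fderiv_of_isOpen hU one_le_two).clm_apply
      continuousOn_const).isOpen_inter_preimage hU isOpen_Ioi
  have hqW : q ∈ W := ⟨hq, by simpa [n, fderiv_apply_eq_px_py, ← sq] using hN⟩
  -- `Φ` and `Ψ` are inverse affine coordinates adapted to the frame `(w, n)` at `q`.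
  set Φ : ℝ × ℝ → ℝ × ℝ := fun c => q + c.1 • w + c.2 • n
  set Ψ : ℝ × ℝ → ℝ × ℝ := fun r =>
    (((r - q).2 * px f q - (r - q).1 * py f q) / N, fderiv ℝ f q (r - q) / N)
  obtain ⟨δ, hδ, hball⟩ := Metric.isOpen_iff.1 (hW.preimage (by fun_prop : Continuous Φ)) 0
    (by simpa [Φ] using hqW)
  filter_upwards [(by fun_prop : Continuous Ψ).tendsto' q 0 (by simp [Ψ])
    (Metric.ball_mem_nhds 0 hδ)] with r hr hfr
  obtain ⟨hα, hβ⟩ : |(Ψ r).1| < δ ∧ |(Ψ r).2| < δ := by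
    simpa [Prod.norm_def] using hr
  have hΦΨ : Φ (Ψ r) = r := by
    ext <;> simp [Φ, Ψ, w, n, rotGrad, fderiv_apply_eq_px_py] <;> field_simp <;> ring
  have hslice : ∀ s ∈ Ioo (-δ) δ, q + (Ψ r).1 • w + s • n ∈ W := fun s hs =>
    @hball ((Ψ r).1, s) (by simpa [Prod.norm_def, abs_lt] using ⟨abs_lt.1 hα, hs⟩)
  have hmono : StrictMonoOn (fun s => f (q + (Ψ r).1 • w + s • n)) (Ioo (-δ) δ) :=
    strictMonoOn_comp_add_smul (convex_Ioo _ _)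
      (fun s hs => ((hf.contDiffAt (hU.mem_nhds (hslice s hs).1)).differentiableAt two_ne_zero))
      (fun s hs => (hslice s hs).2)
  have h0mem : (0 : ℝ) ∈ Ioo (-δ) δ := by simpa using hδ
  have h0 : f (q + (Ψ r).1 • w + (0 : ℝ) • n) = f q := by
    simpa using
      apply_add_smul_rotGrad hU hconv hf hgrad hflex hq (by simpa using (hslice 0 h0mem).1)
  have hβ0 : (Ψ r).2 = 0 :=
    hmono.injOn (by simpa [abs_lt] using hβ) h0mem (by rw [h0, ← hfr]; exact congrArg f hΦΨ)
  simpa [Ψ, hN.ne'] using hβ0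

theorem eventually_fderiv_apply_sub_eq_zero_of_mem_line (hU : IsOpen U) (hconv : Convex ℝ U)
    (hf : ContDiffOn ℝ 2 f U) (hgrad : ∀ p ∈ U, (px f p, py f p) ≠ (0, 0))
    (hflex : ∀ p ∈ U, Flex f p = 0) (hp : p ∈ U) (hq : q ∈ U)
    (hqp : fderiv ℝ f p (q - p) = 0) (hfq : f q = f p) :
    ∀ᶠ r in 𝓝 q, f r = f p → fderiv ℝ f p (r - p) = 0 := by
  have h2 : finrank ℝ (ℝ × ℝ) = 2 := by simp
  have hv := rotGrad_ne_zero (hgrad p hp)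
  obtain ⟨t, ht⟩ := exists_eq_smul_of_apply_eq_zero h2 (coe_fderiv_ne_zero (hgrad p hp)) hv hqp
    (fderiv_apply_rotGrad f p)
  have htan : fderiv ℝ f q (rotGrad f p) = 0 := by
    rw [eq_add_of_sub_eq ht, add_comm] at hq ⊢
    exact fderiv_add_smul_rotGrad_apply_rotGrad hU hconv hf hgrad hflex hp hq
  filter_upwards [eventually_fderiv_apply_sub_eq_zero hU hconv hf hgrad hflex hq] with r hr hfr
  obtain ⟨s, hs⟩ := exists_eq_smul_of_apply_eq_zero h2 (coe_fderiv_ne_zero (hgrad q hq)) hv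
    (hr (hfr.trans hfq.symm)) htan
  rw [← sub_add_sub_cancel r q p, hs, ht, ← add_smul, map_smul, fderiv_apply_rotGrad, smul_zero]

end LevelSets

/-- For the flat connection, if Flex f = 0 and the gradient of f is nonvanishing on a
convex open set, then each connected component of each level set of f is contained in
an affine line. -/
theorem level_sets_are_lines_of_flex_zero
    (U : Set (ℝ × ℝ)) (hU : IsOpen U) (hconv : Convex ℝ U)
    (f : ℝ × ℝ → ℝ) (hf : ContDiffOn ℝ 2 f U)
    (hgrad : ∀ p ∈ U, (px f p, py f p) ≠ (0, 0))
    (hflex : ∀ p ∈ U, Flex f p = 0) :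
    ∀ c : ℝ, ∀ p ∈ U, f p = c →
      ∃ v : ℝ × ℝ, v ≠ 0 ∧
        connectedComponentIn {q ∈ U | f q = c} p ⊆ {q | ∃ t : ℝ, q = p + t • v} := by
  intro c p hp hfp
  set S := {q ∈ U | f q = c}
  have hS : connectedComponentIn S p ⊆ S := connectedComponentIn_subset S p
  have hline : connectedComponentIn S p ⊆ {r | fderiv ℝ f p (r - p) = 0} := by
    refine isPreconnected_connectedComponentIn.subset_of_forall_eventually
      (isClosed_eq (by fun_prop) continuous_const)
      ⟨p, mem_connectedComponentIn ⟨hp, hfp⟩, by simp⟩ fun q ⟨hqC, hqp⟩ => ?_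
    filter_upwards [eventually_fderiv_apply_sub_eq_zero_of_mem_line hU hconv hf hgrad hflex hp
      (hS hqC).1 hqp ((hS hqC).2.trans hfp.symm)] with r hr hrC
    exact hr ((hS hrC).2.trans hfp.symm)
  refine ⟨rotGrad f p, rotGrad_ne_zero (hgrad p hp), fun r hr => ?_⟩
  obtain ⟨t, ht⟩ := exists_eq_smul_of_apply_eq_zero (by simp) (coe_fderiv_ne_zero (hgrad p hp))
    (rotGrad_ne_zero (hgrad p hp)) (hline hr) (fderiv_apply_rotGrad f p)
  exact ⟨t, by rw [← ht, add_sub_cancel]⟩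
end

section
/- The linear system expressing that a 4-web with pairwise transversal foliations is geodesic determines the projective connection uniquely: if f₁,...,f₄ are functions with pairwise nonvanishing Jacobians J(fᵢ,fⱼ) = f_{i,1}f_{j,2} − f_{i,2}f_{j,1} at a point, then the 4×4 linear system Π¹₂₂ f_{i,1}³ − 3Π¹₁₂ f_{i,1}² f_{i,2} − 3Π²₁₂ f_{i,1} f_{i,2}² + Π²₁₁ f_{i,2}³ = Flex fᵢ (i = 1,...,4) for the unknowns (Π¹₂₂, Π¹₁₂, Π²₁₂, Π²₁₁) has a nonsingular coefficient matrix, and in particular a unique solution. -/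
/-!
The coefficient matrix is the projective Vandermonde matrix of the slopes `(b i : a i)`, with its
columns scaled by the weights `1, -3, -3, 1`. Its determinant is therefore
`9 ∏_{i<j} (a i b j - a j b i)`, which transversality makes nonzero, and a square linear system
with invertible matrix has exactly one solution.
-/

open Matrix

theorem Matrix.existsUnique_mulVec_eq_of_isUnit_det {R m : Type*} [CommRing R] [Fintype m]
    [DecidableEq m] {A : Matrix m m R} (hA : IsUnit A.det) (y : m → R) :
    ∃! x, A *ᵥ x = y :=
  have hA' : IsUnit A := (isUnit_iff_isUnit_det A).mpr hA
  Function.Bijective.existsUnique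
    ⟨mulVec_injective_of_isUnit hA', mulVec_surjective_iff_isUnit.mpr hA'⟩ y

theorem Matrix.det_projVandermonde_ne_zero {R : Type*} [CommRing R] [IsDomain R] {n : ℕ}
    {a b : Fin n → R} (h : ∀ i j, i ≠ j → a i * b j - a j * b i ≠ 0) :
    (projVandermonde b a).det ≠ 0 := by
  rw [det_projVandermonde]
  refine Finset.prod_ne_zero_iff.mpr fun i _ => Finset.prod_ne_zero_iff.mpr fun j hj => ?_
  rw [mul_comm (b j), mul_comm (b i)]
  exact h i j (Finset.mem_Ioi.mp hj).ne

theorem Matrix.of_cubic_rows_eq_projVandermonde_mul_diagonal {R : Type*} [CommRing R]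
    (a b : Fin 4 → R) :
    (Matrix.of fun i : Fin 4 =>
        ![a i ^ 3, -3 * a i ^ 2 * b i, -3 * a i * b i ^ 2, b i ^ 3]) =
      projVandermonde b a * diagonal ![1, -3, -3, 1] := by
  ext i j
  rw [of_apply, mul_diagonal, projVandermonde_apply]
  fin_cases j <;>
    simp only [Fin.reduceFinMk, Fin.reduceRev, Fin.isValue, Fin.coe_ofNat_eq_mod, Nat.reduceMod,
      cons_val_zero, cons_val_one, cons_val_two, cons_val_three, head_cons, tail_cons] <;>
    ring

/-- The linear system expressing geodesicity of a 4-web with pairwise transversal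
foliations determines the projective connection (Thomas parameters) uniquely: the
coefficient matrix with rows `(f_{i,1}³, −3f_{i,1}²f_{i,2}, −3f_{i,1}f_{i,2}², f_{i,2}³)`
is nonsingular, and the system has a unique solution. -/
theorem four_web_projective_structure_unique
    (a b F : Fin 4 → ℝ)
    (htrans : ∀ i j, i ≠ j → a i * b j - a j * b i ≠ 0) :
    (Matrix.of fun i : Fin 4 =>
        ![a i ^ 3, -3 * a i ^ 2 * b i, -3 * a i * b i ^ 2, b i ^ 3]).det ≠ 0 ∧
    ∃! v : Fin 4 → ℝ, ∀ i : Fin 4,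
      a i ^ 3 * v 0 - 3 * a i ^ 2 * b i * v 1 - 3 * a i * b i ^ 2 * v 2
        + b i ^ 3 * v 3 = F i := by
  have hdet : (Matrix.of fun i : Fin 4 =>
      ![a i ^ 3, -3 * a i ^ 2 * b i, -3 * a i * b i ^ 2, b i ^ 3]).det ≠ 0 := by
    rw [of_cubic_rows_eq_projVandermonde_mul_diagonal, det_mul, det_diagonal]
    simpa [Fin.prod_univ_four] using det_projVandermonde_ne_zero htrans
  refine ⟨hdet, ?_⟩
  convert existsUnique_mulVec_eq_of_isUnit_det hdet.isUnit F using 2 with v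
  rw [funext_iff]
  refine forall_congr' fun i => ?_
  simp only [mulVec, dotProduct, Fin.sum_univ_four, of_apply, cons_val_zero, cons_val_one,
    cons_val_two, cons_val_three, head_cons, tail_cons]
  ring_nf
end
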